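/- Let W > 0, s > 0 and R_X ≥ R_U ≥ 0. Let L₁, …, L_t and M₁, …, M_m be mutually independent link capacities, each distributed as W·log₂(1 + s·X) with X exponential of rate 1. Let E be the event that (there exists i with L_i ≥ R_U) and ((there exists i with L_i ≥ R_X) or (there exists j with M_j ≥ R_X)). Then P(E) = Σ_{k=1}^{t} B(t, k, p(R_U)) · ((1 − σ^k) + σ^k·(1 − p(R_X)^m)), where σ = (p(R_X) − p(R_U))/(1 − p(R_U)). -/

import Mathlib

open MeasureTheory ProbabilityTheory

/-- The link outage probability `p(R) = P(C < R)` for capacity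
`C = W·log₂(1 + snr·X)` with `X` exponential of rate 1. -/
noncomputable def outageProb (W snr R : ℝ) : ℝ :=
  1 - Real.exp (-(((2 : ℝ) ^ (R / W) - 1) / snr))

/-- `B(N,M,q) = C(N,M)·(1−q)^M·q^{N−M}`. -/
noncomputable def binProb (N M : ℕ) (q : ℝ) : ℝ :=
  (N.choose M : ℝ) * (1 - q) ^ M * q ^ (N - M)

/-! The capacity `W·log₂(1 + snr·X)` reaches the rate `R` exactly when the gain `X` reaches
`a_R = (2^{R/W} − 1)/snr`, and `p(R) = 1 − e^{−a_R}`. With `a ≤ b` the thresholds of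
`R_U ≤ R_X`, the node fails iff all `L i < a` or all `L i, M j < b`; these two events meet
in {all `L i < a`, all `M j < b`}, so by independence the node fails with probability
`p^t + q^{t+m} − p^t q^m`, where `p = p(R_U)`, `q = p(R_X)`. The binomial sum has the same
value `1 − p^t − (q^t − p^t) q^m`, by the binomial theorem applied with `(1 − p)σ + p = q`. -/

section Threshold

variable {W snr R R' y : ℝ}

noncomputable def gainThreshold (W snr R : ℝ) : ℝ :=
  ((2 : ℝ) ^ (R / W) - 1) / snr

lemma outageProb_eq_one_sub_exp (W snr R : ℝ) :
    outageProb W snr R = 1 - Real.exp (-gainThreshold W snr R) :=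
  rfl

lemma gainThreshold_nonneg (hW : 0 < W) (hsnr : 0 ≤ snr) (hR : 0 ≤ R) :
    0 ≤ gainThreshold W snr R :=
  div_nonneg (sub_nonneg.2 (Real.one_le_rpow one_le_two (div_nonneg hR hW.le))) hsnr

lemma gainThreshold_mono (hW : 0 < W) (hsnr : 0 ≤ snr) (h : R ≤ R') :
    gainThreshold W snr R ≤ gainThreshold W snr R' := by
  unfold gainThreshold
  gcongr
  norm_num

lemma le_capacity_iff (hW : 0 < W) (hsnr : 0 < snr) (hy : 0 < 1 + snr * y) :
    R ≤ W * Real.logb 2 (1 + snr * y) ↔ gainThreshold W snr R ≤ y := by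
  rw [mul_comm W, ← div_le_iff₀ hW, Real.le_logb_iff_rpow_le one_lt_two hy, gainThreshold,
    div_le_iff₀ hsnr, mul_comm y snr, sub_le_iff_le_add']

end Threshold

section ExponentialTail

variable {Ω : Type*} [MeasureSpace Ω]

def HasUnitExpTail (f : Ω → ℝ) : Prop :=
  ∀ x : ℝ, 0 ≤ x → ℙ {ω | f ω > x} = ENNReal.ofReal (Real.exp (-x))

variable [IsProbabilityMeasure (ℙ : Measure Ω)] {f : Ω → ℝ} {x : ℝ}

lemma HasUnitExpTail.measure_le (h : HasUnitExpTail f) (hx : 0 ≤ x) :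
    ℙ {ω | x ≤ f ω} = ENNReal.ofReal (Real.exp (-x)) := by
  have hlow : ENNReal.ofReal (Real.exp (-x)) ≤ ℙ {ω | x ≤ f ω} :=
    h x hx ▸ measure_mono fun ω (hω : f ω > x) ↦ hω.le
  refine le_antisymm ?_ hlow
  rcases hx.eq_or_lt with rfl | hx
  · simpa using prob_le_one
  -- `{x ≤ f} ⊆ {f > y}` for `y < x`, and the tail is continuous at `x`
  have hcont : Filter.Tendsto (fun y ↦ ENNReal.ofReal (Real.exp (-y))) (nhdsWithin x (Set.Iio x))
      (nhds (ENNReal.ofReal (Real.exp (-x)))) := by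
    refine Filter.Tendsto.mono_left ?_ nhdsWithin_le_nhds
    exact (ENNReal.continuous_ofReal.comp (Real.continuous_exp.comp continuous_neg)).tendsto x
  refine ge_of_tendsto hcont ?_
  filter_upwards [nhdsWithin_le_nhds (eventually_gt_nhds hx), self_mem_nhdsWithin]
    with y hy (hyx : y < x)
  exact h y hy.le ▸ measure_mono fun ω (hω : x ≤ f ω) ↦ show f ω > y from hyx.trans_le hω

lemma HasUnitExpTail.measureReal_lt (h : HasUnitExpTail f) (hf : Measurable f) (hx : 0 ≤ x) :
    (ℙ : Measure Ω).real {ω | f ω < x} = 1 - Real.exp (-x) := by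
  have hcompl : {ω | f ω < x} = {ω | x ≤ f ω}ᶜ := by
    ext ω
    simp
  rw [hcompl, probReal_compl_eq_one_sub (measurableSet_le measurable_const hf), measureReal_def,
    h.measure_le hx, ENNReal.toReal_ofReal (Real.exp_nonneg _)]

lemma HasUnitExpTail.ae_pos (h : HasUnitExpTail f) (hf : Measurable f) : ∀ᵐ ω, 0 < f ω :=
  (ae_iff_prob_eq_one (measurable_const.lt hf)).2 (by simpa using h 0 le_rfl)

lemma HasUnitExpTail.ae_le_capacity_iff (h : HasUnitExpTail f) (hf : Measurable f) {W snr : ℝ}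
    (hW : 0 < W) (hsnr : 0 < snr) :
    ∀ᵐ ω, ∀ R, R ≤ W * Real.logb 2 (1 + snr * f ω) ↔ gainThreshold W snr R ≤ f ω := by
  filter_upwards [h.ae_pos hf] with ω hω R
  exact le_capacity_iff hW hsnr (by positivity)

end ExponentialTail

section Independence

variable {Ω : Type*}

lemma ProbabilityTheory.iIndepFun.measureReal_forall_lt [MeasurableSpace Ω] {μ : Measure Ω}
    {ι : Type*} [Fintype ι] {Y : ι → Ω → ℝ} (h : iIndepFun Y μ) (c : ι → ℝ) :
    μ.real {ω | ∀ u, Y u ω < c u} = ∏ u, μ.real {ω | Y u ω < c u} := by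
  rw [Set.ofPred_forall, measureReal_def, h.meas_iInter (s := fun u ↦ {ω | Y u ω < c u})
    fun u ↦ ⟨Set.Iio (c u), measurableSet_Iio, rfl⟩, ENNReal.toReal_prod]
  rfl

variable [MeasureSpace Ω] [IsProbabilityMeasure (ℙ : Measure Ω)]
  {ι κ : Type*} [Fintype ι] [Fintype κ] {L : ι → Ω → ℝ} {M : κ → Ω → ℝ}

lemma measureReal_forall_lt_of_hasUnitExpTail {Y : ι → Ω → ℝ} (hind : iIndepFun Y ℙ)
    (hmeas : ∀ u, Measurable (Y u)) (htail : ∀ u, HasUnitExpTail (Y u)) {c : ℝ} (hc : 0 ≤ c) :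
    (ℙ : Measure Ω).real {ω | ∀ u, Y u ω < c} = (1 - Real.exp (-c)) ^ Fintype.card ι := by
  rw [hind.measureReal_forall_lt, Finset.prod_congr rfl fun u _ ↦
    (htail u).measureReal_lt (hmeas u) hc, Finset.prod_const, Finset.card_univ]

lemma measureReal_forall_lt_and_forall_lt (hind : iIndepFun (Sum.elim L M) ℙ)
    (hLmeas : ∀ i, Measurable (L i)) (hMmeas : ∀ j, Measurable (M j))
    (hLexp : ∀ i, HasUnitExpTail (L i)) (hMexp : ∀ j, HasUnitExpTail (M j))
    {a b : ℝ} (ha : 0 ≤ a) (hb : 0 ≤ b) :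
    (ℙ : Measure Ω).real {ω | (∀ i, L i ω < a) ∧ ∀ j, M j ω < b} =
      (1 - Real.exp (-a)) ^ Fintype.card ι * (1 - Real.exp (-b)) ^ Fintype.card κ := by
  have h := hind.measureReal_forall_lt (Sum.elim (fun _ ↦ a) fun _ ↦ b)
  simp only [Sum.forall, Sum.elim_inl, Sum.elim_inr, Fintype.prod_sum_type] at h
  rw [h, Finset.prod_congr rfl fun i _ ↦ (hLexp i).measureReal_lt (hLmeas i) ha,
    Finset.prod_congr rfl fun j _ ↦ (hMexp j).measureReal_lt (hMmeas j) hb,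
    Finset.prod_const, Finset.prod_const, Finset.card_univ, Finset.card_univ]

end Independence

section SuccessEvent

variable {Ω : Type*} [MeasureSpace Ω] [IsProbabilityMeasure (ℙ : Measure Ω)]
  {ι κ : Type*} [Fintype ι] [Fintype κ] {L : ι → Ω → ℝ} {M : κ → Ω → ℝ}

lemma measureReal_exists_le_and_exists_le (hind : iIndepFun (Sum.elim L M) ℙ)
    (hLmeas : ∀ i, Measurable (L i)) (hMmeas : ∀ j, Measurable (M j))
    (hLexp : ∀ i, HasUnitExpTail (L i)) (hMexp : ∀ j, HasUnitExpTail (M j))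
    {a b : ℝ} (ha : 0 ≤ a) (hab : a ≤ b) :
    (ℙ : Measure Ω).real {ω | (∃ i, a ≤ L i ω) ∧ ((∃ i, b ≤ L i ω) ∨ ∃ j, b ≤ M j ω)} =
      1 - (1 - Real.exp (-a)) ^ Fintype.card ι -
        ((1 - Real.exp (-b)) ^ Fintype.card ι - (1 - Real.exp (-a)) ^ Fintype.card ι) *
          (1 - Real.exp (-b)) ^ Fintype.card κ := by
  have hb : 0 ≤ b := ha.trans hab
  set noUplink := {ω | ∀ i, L i ω < a}
  set noDownlink := {ω | (∀ i, L i ω < b) ∧ ∀ j, M j ω < b}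
  have hfail : {ω | (∃ i, a ≤ L i ω) ∧ ((∃ i, b ≤ L i ω) ∨ ∃ j, b ≤ M j ω)} =
      (noUplink ∪ noDownlink)ᶜ := by
    ext ω
    simp [noUplink, noDownlink, or_iff_not_imp_left]
  have hboth : noUplink ∩ noDownlink = {ω | (∀ i, L i ω < a) ∧ ∀ j, M j ω < b} := by
    ext ω
    simp only [noUplink, noDownlink, Set.mem_inter_iff, Set.mem_ofPred_eq]
    exact ⟨fun h ↦ ⟨h.1, h.2.2⟩, fun h ↦ ⟨h.1, fun i ↦ (h.1 i).trans_le hab, h.2⟩⟩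
  have hmeasUp : MeasurableSet noUplink := by measurability
  have hmeasDown : MeasurableSet noDownlink := by measurability
  have hLind : iIndepFun L ℙ := iIndepFun.precomp (g := Sum.inl) Sum.inl_injective hind
  have hunion := measureReal_union_add_inter (μ := (ℙ : Measure Ω)) (s := noUplink) hmeasDown
  rw [hboth, measureReal_forall_lt_and_forall_lt hind hLmeas hMmeas hLexp hMexp ha hb,
    measureReal_forall_lt_of_hasUnitExpTail hLind hLmeas hLexp ha,
    measureReal_forall_lt_and_forall_lt hind hLmeas hMmeas hLexp hMexp hb hb] at hunion
  rw [hfail, probReal_compl_eq_one_sub (hmeasUp.union hmeasDown)]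
  linarith

end SuccessEvent

section BinomialSum

open Finset

lemma sum_binProb_mul_pow (t : ℕ) (p x : ℝ) :
    ∑ k ∈ range (t + 1), binProb t k p * x ^ k = ((1 - p) * x + p) ^ t := by
  rw [add_pow]
  refine sum_congr rfl fun k _ ↦ ?_
  rw [binProb, mul_pow]
  ring

lemma sum_Icc_binProb_mul_pow (t : ℕ) (p x : ℝ) :
    ∑ k ∈ Icc 1 t, binProb t k p * x ^ k = ((1 - p) * x + p) ^ t - p ^ t := by
  have hrange : range (t + 1) = insert 0 (Icc 1 t) := by
    ext k
    simp only [mem_range, mem_insert, mem_Icc]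
    omega
  rw [← sum_binProb_mul_pow, hrange, sum_insert (by simp)]
  simp [binProb]

lemma sum_Icc_binProb_success (t m : ℕ) {p : ℝ} (q : ℝ) (hp : p ≠ 1) :
    ∑ k ∈ Icc 1 t, binProb t k p *
        ((1 - ((q - p) / (1 - p)) ^ k) + ((q - p) / (1 - p)) ^ k * (1 - q ^ m)) =
      1 - p ^ t - (q ^ t - p ^ t) * q ^ m := by
  have hσ : (1 - p) * ((q - p) / (1 - p)) + p = q := by
    rw [mul_div_cancel₀ _ (sub_ne_zero.2 hp.symm)]
    ring
  set σ := (q - p) / (1 - p)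
  have hone := sum_Icc_binProb_mul_pow t p 1
  have hσsum := sum_Icc_binProb_mul_pow t p σ
  simp only [one_pow, mul_one, sub_add_cancel] at hone
  rw [hσ] at hσsum
  calc ∑ k ∈ Icc 1 t, binProb t k p * ((1 - σ ^ k) + σ ^ k * (1 - q ^ m))
      = ∑ k ∈ Icc 1 t, binProb t k p - (∑ k ∈ Icc 1 t, binProb t k p * σ ^ k) * q ^ m := by
        rw [sum_mul, ← sum_sub_distrib]
        exact sum_congr rfl fun k _ ↦ by ring
    _ = 1 - p ^ t - (q ^ t - p ^ t) * q ^ m := by rw [hone, hσsum]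

end BinomialSum

/-- **Per-node success probability `P(success₅)` in the XOR-CoW analysis.**
`L₁,…,L_t` and `M₁,…,M_m` are mutually independent link capacities, each
`W·log₂(1 + snr·X)` with gain `X` exponential of rate 1 and `R_X ≥ R_U ≥ 0`.
The probability that (some `L i ≥ R_U`) and (some `L i ≥ R_X` or some
`M j ≥ R_X`) is `∑_{k=1}^{t} B(t,k,p(R_U))·((1 − σ^k) + σ^k·(1 − p(R_X)^m))`
with `σ = (p(R_X) − p(R_U))/(1 − p(R_U))`. -/
theorem xorCoW_per_node_success {Ω : Type*} [MeasureSpace Ω]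
    [IsProbabilityMeasure (ℙ : Measure Ω)]
    (t m : ℕ) (W snr R_U R_X : ℝ) (hW : 0 < W) (hsnr : 0 < snr)
    (hRU : 0 ≤ R_U) (hRX : R_U ≤ R_X)
    (L : Fin t → Ω → ℝ) (M : Fin m → Ω → ℝ)
    (hLmeas : ∀ i, Measurable (L i)) (hMmeas : ∀ j, Measurable (M j))
    (hindep : iIndepFun (Sum.elim L M) ℙ)
    (hLexp : ∀ i, ∀ x : ℝ, 0 ≤ x →
      ℙ {ω | L i ω > x} = ENNReal.ofReal (Real.exp (-x)))
    (hMexp : ∀ j, ∀ x : ℝ, 0 ≤ x →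
      ℙ {ω | M j ω > x} = ENNReal.ofReal (Real.exp (-x))) :
    ℙ {ω | (∃ i : Fin t, R_U ≤ W * Real.logb 2 (1 + snr * L i ω)) ∧
        ((∃ i : Fin t, R_X ≤ W * Real.logb 2 (1 + snr * L i ω)) ∨
          (∃ j : Fin m, R_X ≤ W * Real.logb 2 (1 + snr * M j ω)))} =
      ENNReal.ofReal (∑ k ∈ Finset.Icc 1 t,
        binProb t k (outageProb W snr R_U) *
          ((1 - ((outageProb W snr R_X - outageProb W snr R_U) /
              (1 - outageProb W snr R_U)) ^ k) +
            ((outageProb W snr R_X - outageProb W snr R_U) /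
              (1 - outageProb W snr R_U)) ^ k *
              (1 - (outageProb W snr R_X) ^ m))) := by
  have hevent : {ω | (∃ i : Fin t, R_U ≤ W * Real.logb 2 (1 + snr * L i ω)) ∧
        ((∃ i : Fin t, R_X ≤ W * Real.logb 2 (1 + snr * L i ω)) ∨
          (∃ j : Fin m, R_X ≤ W * Real.logb 2 (1 + snr * M j ω)))} =ᵐ[ℙ]
      {ω | (∃ i, gainThreshold W snr R_U ≤ L i ω) ∧
        ((∃ i, gainThreshold W snr R_X ≤ L i ω) ∨ ∃ j, gainThreshold W snr R_X ≤ M j ω)} := by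
    filter_upwards
      [ae_all_iff.2 fun i ↦ HasUnitExpTail.ae_le_capacity_iff (hLexp i) (hLmeas i) hW hsnr,
        ae_all_iff.2 fun j ↦ HasUnitExpTail.ae_le_capacity_iff (hMexp j) (hMmeas j) hW hsnr]
      with ω hL hM
    exact propext <| and_congr (exists_congr fun i ↦ hL i R_U)
      (or_congr (exists_congr fun i ↦ hL i R_X) (exists_congr fun j ↦ hM j R_X))
  have hp : outageProb W snr R_U ≠ 1 := by
    simp [outageProb_eq_one_sub_exp, (Real.exp_pos _).ne']
  rw [← ofReal_measureReal, measureReal_congr hevent,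
    measureReal_exists_le_and_exists_le hindep hLmeas hMmeas hLexp hMexp
      (gainThreshold_nonneg hW hsnr.le hRU) (gainThreshold_mono hW hsnr.le hRX),
    sum_Icc_binProb_success t m _ hp]
  simp only [Fintype.card_fin, outageProb_eq_one_sub_exp]
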